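/- arXiv:1306.1587 — 5 statements merged into one kernel-verified Lean document; each statement's English description precedes it below -/
import Mathlib

section
/- Let S̃ = D^{-1/2} S D^{-1/2} be the normalized connection matrix of a connection graph, with orthonormal eigenvectors v_1, …, v_{nq} of ℝ^{nq} and eigenvalues λ_1, …, λ_{nq} (S̃ v_l = λ_l v_l). For a positive integer t, define the vector diffusion map V_t(i) ∈ ℝ^{(nq)²} of a vertex i as the vector whose (l,r)-th entry is (λ_l λ_r)^t ⟨v_l[i], v_r[i]⟩, for l, r ∈ {1,…,nq}. Then for all vertices i, j, the Euclidean inner product ⟨V_t(i), V_t(j)⟩ in ℝ^{(nq)²} equals the squared Frobenius (Hilbert–Schmidt) norm ‖(S̃^{2t})(i,j)‖²_HS of the (i,j)-th q×q block of S̃^{2t}. -/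
open Matrix BigOperators

/-- The Euclidean inner product of the vector diffusion maps of two vertices
equals the squared Hilbert–Schmidt norm of the corresponding block of `S̃^{2t}`. -/
theorem vdm_inner_product_eq_hs_norm
    {n q : ℕ} (hn : 1 ≤ n) (hq : 1 ≤ q)
    (E : Finset (Fin n × Fin n))
    (hE_symm : ∀ i j : Fin n, (i, j) ∈ E → (j, i) ∈ E)
    (hE_irrefl : ∀ i : Fin n, (i, i) ∉ E)
    (w : Fin n → Fin n → ℝ)
    (hw_pos : ∀ i j : Fin n, (i, j) ∈ E → 0 < w i j)
    (hw_symm : ∀ i j : Fin n, (i, j) ∈ E → w i j = w j i)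
    (g : Fin n → Fin n → Matrix (Fin q) (Fin q) ℝ)
    (hg_orth : ∀ i j : Fin n, (i, j) ∈ E → (g i j)ᵀ * g i j = 1)
    (hg_symm : ∀ i j : Fin n, (i, j) ∈ E → g j i = (g i j)ᵀ)
    (d : Fin n → ℝ)
    (hd : ∀ i : Fin n, d i = ∑ j : Fin n, if (i, j) ∈ E then w i j else 0)
    (hd_pos : ∀ i : Fin n, 0 < d i)
    (S : Matrix (Fin n × Fin q) (Fin n × Fin q) ℝ)
    (hS : ∀ (i j : Fin n) (a b : Fin q),
      S (i, a) (j, b) = if (i, j) ∈ E then w i j * g i j a b else 0)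
    (Stilde : Matrix (Fin n × Fin q) (Fin n × Fin q) ℝ)
    (hStilde : ∀ (i j : Fin n) (a b : Fin q),
      Stilde (i, a) (j, b) = S (i, a) (j, b) / (Real.sqrt (d i) * Real.sqrt (d j)))
    -- an orthonormal basis of `ℝ^{nq}` consisting of eigenvectors of `S̃`
    (v : Fin n × Fin q → (Fin n × Fin q → ℝ))
    (lam : Fin n × Fin q → ℝ)
    (h_orthonormal : ∀ l m : Fin n × Fin q,
      (∑ x : Fin n × Fin q, v l x * v m x) = if l = m then (1 : ℝ) else 0)
    (h_eig : ∀ l : Fin n × Fin q, Stilde *ᵥ (v l) = lam l • v l)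
    (t : ℕ) (ht : 1 ≤ t)
    -- the vector diffusion map `V_t`, with entries indexed by pairs `(l, r)`
    (Vt : Fin n → ((Fin n × Fin q) × (Fin n × Fin q)) → ℝ)
    (hVt : ∀ (i : Fin n) (l r : Fin n × Fin q),
      Vt i (l, r) = (lam l * lam r) ^ t * ∑ a : Fin q, v l (i, a) * v r (i, a))
    (i j : Fin n) :
    (∑ lr : (Fin n × Fin q) × (Fin n × Fin q), Vt i lr * Vt j lr)
      = ∑ a : Fin q, ∑ b : Fin q, ((Stilde ^ (2 * t)) (i, a) (j, b)) ^ 2 := by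

  classical
  -- completeness of the orthonormal system
  set V : Matrix (Fin n × Fin q) (Fin n × Fin q) ℝ := Matrix.of v with hV
  have hVVt : V * Vᵀ = 1 := by
    ext l m
    simpa [Matrix.mul_apply, hV, Matrix.one_apply] using h_orthonormal l m
  have hVtV : Vᵀ * V = 1 := mul_eq_one_comm.mp hVVt
  have hcomp : ∀ x y : Fin n × Fin q,
      (∑ l : Fin n × Fin q, v l x * v l y) = if x = y then (1 : ℝ) else 0 := by
    intro x y
    have h := congrFun (congrFun hVtV x) y
    simpa [Matrix.mul_apply, hV, Matrix.one_apply, mul_comm] using h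
  -- eigenvector powers
  have heigpow : ∀ (m : ℕ) (l : Fin n × Fin q),
      (Stilde ^ m) *ᵥ v l = (lam l ^ m) • v l := by
    intro m l
    induction m with
    | zero => simp
    | succ m ih =>
      rw [pow_succ, ← Matrix.mulVec_mulVec, h_eig, Matrix.mulVec_smul, ih,
        smul_smul, pow_succ, mul_comm]
  -- spectral expansion of entries of powers of Stilde
  have hentry : ∀ (m : ℕ) (x y : Fin n × Fin q),
      (Stilde ^ m) x y = ∑ l : Fin n × Fin q, lam l ^ m * (v l x * v l y) := by
    intro m x y
    have h1 : (Stilde ^ m) x y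
        = ∑ z : Fin n × Fin q, (Stilde ^ m) x z * (if z = y then (1 : ℝ) else 0) := by
      simp
    rw [h1]
    simp_rw [← hcomp, Finset.mul_sum]
    rw [Finset.sum_comm]
    refine Finset.sum_congr rfl fun l _ => ?_
    have h2 : ((Stilde ^ m) *ᵥ v l) x = (lam l ^ m) * v l x := by
      rw [heigpow m l]; simp [mul_comm]
    calc ∑ z : Fin n × Fin q, (Stilde ^ m) x z * (v l z * v l y)
        = (∑ z : Fin n × Fin q, (Stilde ^ m) x z * v l z) * v l y := by
          rw [Finset.sum_mul]; exact Finset.sum_congr rfl fun z _ => by ring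
      _ = lam l ^ m * (v l x * v l y) := by
          rw [show (∑ z : Fin n × Fin q, (Stilde ^ m) x z * v l z)
              = ((Stilde ^ m) *ᵥ v l) x from rfl, h2]; ring
  -- main computation
  have hL : (∑ lr : (Fin n × Fin q) × (Fin n × Fin q), Vt i lr * Vt j lr)
      = ∑ l : Fin n × Fin q, ∑ r : Fin n × Fin q, ∑ a : Fin q, ∑ b : Fin q,
          (lam l ^ (2 * t) * (v l (i, a) * v l (j, b)))
            * (lam r ^ (2 * t) * (v r (i, a) * v r (j, b))) := by
    rw [Fintype.sum_prod_type]
    refine Finset.sum_congr rfl fun l _ => Finset.sum_congr rfl fun r _ => ?_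
    rw [hVt, hVt]
    rw [show ((lam l * lam r) ^ t * ∑ a : Fin q, v l (i, a) * v r (i, a))
          * ((lam l * lam r) ^ t * ∑ b : Fin q, v l (j, b) * v r (j, b))
        = ((lam l * lam r) ^ t * (lam l * lam r) ^ t)
          * ((∑ a : Fin q, v l (i, a) * v r (i, a))
              * (∑ b : Fin q, v l (j, b) * v r (j, b))) from by ring]
    rw [Finset.sum_mul_sum, Finset.mul_sum]
    refine Finset.sum_congr rfl fun a _ => ?_
    rw [Finset.mul_sum]
    refine Finset.sum_congr rfl fun b _ => ?_
    simp only [two_mul, pow_add, mul_pow]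
    ring
  have swap4 : ∀ (f : (Fin n × Fin q) → (Fin n × Fin q) → Fin q → Fin q → ℝ),
      (∑ l : Fin n × Fin q, ∑ r : Fin n × Fin q, ∑ a : Fin q, ∑ b : Fin q, f l r a b)
        = ∑ a : Fin q, ∑ b : Fin q, ∑ l : Fin n × Fin q, ∑ r : Fin n × Fin q, f l r a b := by
    intro f
    calc (∑ l : Fin n × Fin q, ∑ r : Fin n × Fin q, ∑ a : Fin q, ∑ b : Fin q, f l r a b)
        = ∑ l : Fin n × Fin q, ∑ a : Fin q, ∑ r : Fin n × Fin q, ∑ b : Fin q, f l r a b :=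
          Finset.sum_congr rfl fun l _ => Finset.sum_comm
      _ = ∑ a : Fin q, ∑ l : Fin n × Fin q, ∑ r : Fin n × Fin q, ∑ b : Fin q, f l r a b :=
          Finset.sum_comm
      _ = ∑ a : Fin q, ∑ l : Fin n × Fin q, ∑ b : Fin q, ∑ r : Fin n × Fin q, f l r a b :=
          Finset.sum_congr rfl fun a _ => Finset.sum_congr rfl fun l _ => Finset.sum_comm
      _ = ∑ a : Fin q, ∑ b : Fin q, ∑ l : Fin n × Fin q, ∑ r : Fin n × Fin q, f l r a b :=
          Finset.sum_congr rfl fun a _ => Finset.sum_comm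
  rw [hL, swap4]
  refine Finset.sum_congr rfl fun a _ => Finset.sum_congr rfl fun b _ => ?_
  rw [hentry (2 * t) (i, a) (j, b), sq, Finset.sum_mul_sum]
end

section
/- Bracketing Glivenko–Cantelli theorem. Let (M, 𝒜, μ) be a probability space, and let X₁, X₂, … be independent M-valued random variables on a probability space, each with law μ. Let 𝔉 be a class of measurable functions f : M → ℝ such that for every ε > 0 there exist finitely many pairs (l₁,u₁), …, (l_N, u_N) of μ-integrable functions with ∫(u_k − l_k) dμ ≤ ε for each k, and such that every f ∈ 𝔉 satisfies l_k ≤ f ≤ u_k pointwise for some k. Then every f ∈ 𝔉 is μ-integrable and, almost surely, sup_{f ∈ 𝔉} | (1/n) Σ_{i=1}^n f(X_i) − ∫_M f dμ | → 0 as n → ∞. -/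
open MeasureTheory Filter Topology ProbabilityTheory

/-!
Every bracket endpoint obeys the strong law of large numbers, and for the brackets of width
`1 / (m + 1)`, `m ∈ ℕ`, there are only countably many endpoints, so almost surely all of their
empirical means converge at once. If `l ≤ f ≤ u`, monotonicity of empirical means and of
integrals sandwiches the error at `f` between the errors at `l` and `u`, up to `∫ (u - l)`;
the resulting bound depends on `f` only through its bracket, hence is uniform over the class.
-/

section Empirical

variable {M : Type*}

noncomputable def empiricalMean (x : ℕ → M) (f : M → ℝ) (n : ℕ) : ℝ :=
  1 / (n : ℝ) * ∑ i ∈ Finset.range n, f (x i)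

lemma empiricalMean_mono (x : ℕ → M) {f g : M → ℝ} (hfg : f ≤ g) (n : ℕ) :
    empiricalMean x f n ≤ empiricalMean x g n :=
  mul_le_mul_of_nonneg_left (Finset.sum_le_sum fun i _ => hfg (x i)) (by positivity)

lemma abs_sub_le_of_bracket {a b c α β γ : ℝ} (hab : a ≤ b) (hbc : b ≤ c) (hαβ : α ≤ β)
    (hβγ : β ≤ γ) : |b - β| ≤ |a - α| + |c - γ| + (γ - α) := by
  rw [abs_le]
  constructor <;>
    linarith [le_abs_self (a - α), neg_abs_le (a - α), le_abs_self (c - γ), neg_abs_le (c - γ)]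

variable [MeasurableSpace M] {μ : Measure M}

lemma abs_empiricalMean_sub_integral_le (x : ℕ → M) {l f u : M → ℝ} (hlf : l ≤ f) (hfu : f ≤ u)
    (hl : Integrable l μ) (hf : Integrable f μ) (hu : Integrable u μ) (n : ℕ) :
    |empiricalMean x f n - ∫ y, f y ∂μ|
      ≤ |empiricalMean x l n - ∫ y, l y ∂μ| + |empiricalMean x u n - ∫ y, u y ∂μ|
        + ∫ y, (u y - l y) ∂μ := by
  rw [integral_sub hu hl]
  exact abs_sub_le_of_bracket (empiricalMean_mono x hlf n) (empiricalMean_mono x hfu n)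
    (integral_mono hl hf hlf) (integral_mono hf hu hfu)

theorem tendsto_iSup_abs_empiricalMean_sub_integral (x : ℕ → M) (F : Set (M → ℝ))
    (hFint : ∀ f ∈ F, Integrable f μ)
    (hbracket : ∀ ε > 0, ∃ N : ℕ, ∃ l u : Fin N → M → ℝ,
      (∀ k, Integrable (l k) μ) ∧ (∀ k, Integrable (u k) μ) ∧
      (∀ k, ∫ y, (u k y - l k y) ∂μ ≤ ε) ∧ (∀ f ∈ F, ∃ k, l k ≤ f ∧ f ≤ u k) ∧
      (∀ k, Tendsto (empiricalMean x (l k)) atTop (𝓝 (∫ y, l k y ∂μ))) ∧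
      (∀ k, Tendsto (empiricalMean x (u k)) atTop (𝓝 (∫ y, u k y ∂μ)))) :
    Tendsto (fun n => ⨆ f : F, |empiricalMean x f n - ∫ y, (f : M → ℝ) y ∂μ|) atTop (𝓝 0) := by
  refine tendsto_order.2 ⟨fun a ha => Eventually.of_forall fun n =>
    ha.trans_le (Real.iSup_nonneg fun _ => abs_nonneg _), fun ε hε => ?_⟩
  obtain ⟨N, l, u, hl, hu, hwidth, hcov, hlim_l, hlim_u⟩ := hbracket (ε / 4) (by positivity)
  have hclose : ∀ᶠ n in atTop, ∀ k,
      |empiricalMean x (l k) n - ∫ y, l k y ∂μ| < ε / 4 ∧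
        |empiricalMean x (u k) n - ∫ y, u k y ∂μ| < ε / 4 := by
    simp only [eventually_all, ← Real.dist_eq]
    exact fun k => (Metric.tendsto_nhds.1 (hlim_l k) _ (by positivity)).and
      (Metric.tendsto_nhds.1 (hlim_u k) _ (by positivity))
  filter_upwards [hclose] with n hn
  refine (Real.iSup_le (fun f => ?_) (by positivity : 0 ≤ ε / 4 + ε / 4 + ε / 4)).trans_lt
    (by linarith)
  obtain ⟨k, hlf, hfu⟩ := hcov f f.2
  linarith [abs_empiricalMean_sub_integral_le x hlf hfu (hl k) (hFint f f.2) (hu k) n,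
    (hn k).1, (hn k).2, hwidth k]

theorem ae_tendsto_empiricalMean {Ω : Type*} [MeasurableSpace Ω] {P : Measure Ω}
    {X : ℕ → Ω → M} (hXmeas : ∀ i, AEMeasurable (X i) P)
    (hXindep : Pairwise fun i j => X i ⟂ᵢ[P] X j) (hXlaw : ∀ i, P.map (X i) = μ)
    {g : M → ℝ} (hg : Integrable g μ) :
    ∀ᵐ ω ∂P, Tendsto (empiricalMean (fun i => X i ω) g) atTop (𝓝 (∫ y, g y ∂μ)) := by
  have hg_law : ∀ i, AEStronglyMeasurable g (P.map (X i)) := fun i => (hXlaw i) ▸ hg.1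
  have hint : Integrable (g ∘ X 0) P :=
    (integrable_map_measure (hg_law 0) (hXmeas 0)).1 ((hXlaw 0) ▸ hg)
  have hmean : ∫ ω, (g ∘ X 0) ω ∂P = ∫ y, g y ∂μ := by
    rw [← hXlaw 0, integral_map (hXmeas 0) (hg_law 0)]
    rfl
  have hslln := strong_law_ae_real (fun i => g ∘ X i) hint
    (fun i j hij => (hXindep hij).comp₀ (hXmeas i) (hXmeas j)
      (hg_law i).aemeasurable (hg_law j).aemeasurable)
    (fun i => IdentDistrib.comp_of_aemeasurable
      ⟨hXmeas i, hXmeas 0, (hXlaw i).trans (hXlaw 0).symm⟩ (hg_law i).aemeasurable)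
  filter_upwards [hslln] with ω hω
  rw [← hmean]
  exact hω.congr fun n => (one_div_mul_eq_div _ _).symm

end Empirical

theorem bracketing_glivenko_cantelli_general
    {Ω M : Type*} [MeasurableSpace Ω] [MeasurableSpace M]
    (P : Measure Ω)
    (μ : Measure M)
    (X : ℕ → Ω → M) (hXmeas : ∀ i, Measurable (X i))
    (hXindep : ProbabilityTheory.iIndepFun X P)
    (hXlaw : ∀ i, Measure.map (X i) P = μ)
    (F : Set (M → ℝ)) (hFmeas : ∀ f ∈ F, Measurable f)
    (hbracket : ∀ ε : ℝ, 0 < ε → ∃ N : ℕ, ∃ l u : Fin N → M → ℝ,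
      (∀ k, Integrable (l k) μ) ∧ (∀ k, Integrable (u k) μ) ∧
      (∀ k, (∫ x, (u k x - l k x) ∂μ) ≤ ε) ∧
      (∀ f ∈ F, ∃ k, ∀ x, l k x ≤ f x ∧ f x ≤ u k x)) :
    (∀ f ∈ F, Integrable f μ)
      ∧ ∀ᵐ ω ∂P, Tendsto
          (fun n : ℕ => ⨆ f : F,
            |(1 / (n : ℝ)) * ∑ i ∈ Finset.range n, (f : M → ℝ) (X i ω)
              - ∫ x, (f : M → ℝ) x ∂μ|)
          atTop (𝓝 0) := by
  have hFint : ∀ f ∈ F, Integrable f μ := fun f hf => by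
    obtain ⟨N, l, u, hl, hu, -, hcov⟩ := hbracket 1 one_pos
    obtain ⟨k, hk⟩ := hcov f hf
    exact integrable_of_le_of_le (hFmeas f hf).aestronglyMeasurable
      (ae_of_all _ fun x => (hk x).1) (ae_of_all _ fun x => (hk x).2) (hl k) (hu k)
  refine ⟨hFint, ?_⟩
  choose N l u hl hu hwidth hcov using fun m : ℕ => hbracket (1 / (m + 1)) m.one_div_pos_of_nat
  have hslln_of_integrable {g : M → ℝ} (hg : Integrable g μ) :=
    ae_tendsto_empiricalMean (fun i => (hXmeas i).aemeasurable)
      (fun i j hij => hXindep.indepFun hij) hXlaw hg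
  have hslln : ∀ᵐ ω ∂P, ∀ m k,
      Tendsto (empiricalMean (fun i => X i ω) (l m k)) atTop (𝓝 (∫ y, l m k y ∂μ)) ∧
        Tendsto (empiricalMean (fun i => X i ω) (u m k)) atTop (𝓝 (∫ y, u m k y ∂μ)) := by
    simp only [ae_all_iff]
    exact fun m k => (hslln_of_integrable (hl m k)).and (hslln_of_integrable (hu m k))
  filter_upwards [hslln] with ω hω
  refine tendsto_iSup_abs_empiricalMean_sub_integral _ F hFint fun ε hε => ?_
  obtain ⟨m, hm⟩ := exists_nat_one_div_lt hε
  refine ⟨N m, l m, u m, hl m, hu m, fun k => (hwidth m k).trans hm.le, fun f hf => ?_,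
    fun k => (hω m k).1, fun k => (hω m k).2⟩
  obtain ⟨k, hk⟩ := hcov m f hf
  exact ⟨k, fun x => (hk x).1, fun x => (hk x).2⟩

/-- Bracketing Glivenko–Cantelli theorem: if a class of measurable functions
admits, for every `ε > 0`, a finite cover by `ε`-brackets in `L¹(μ)`, then every member is
integrable and the empirical means converge to the true means uniformly over the class, almost
surely. -/
theorem bracketing_glivenko_cantelli
    {Ω M : Type*} [MeasurableSpace Ω] [MeasurableSpace M]
    (P : Measure Ω) [IsProbabilityMeasure P]
    (μ : Measure M) [IsProbabilityMeasure μ]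
    (X : ℕ → Ω → M) (hXmeas : ∀ i, Measurable (X i))
    (hXindep : ProbabilityTheory.iIndepFun X P)
    (hXlaw : ∀ i, Measure.map (X i) P = μ)
    (F : Set (M → ℝ)) (hFmeas : ∀ f ∈ F, Measurable f)
    (hbracket : ∀ ε : ℝ, 0 < ε → ∃ N : ℕ, ∃ l u : Fin N → M → ℝ,
      (∀ k, Integrable (l k) μ) ∧ (∀ k, Integrable (u k) μ) ∧
      (∀ k, (∫ x, (u k x - l k x) ∂μ) ≤ ε) ∧
      (∀ f ∈ F, ∃ k, ∀ x, l k x ≤ f x ∧ f x ≤ u k x)) :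
    (∀ f ∈ F, Integrable f μ)
      ∧ ∀ᵐ ω ∂P, Tendsto
          (fun n : ℕ => ⨆ f : F,
            |(1 / (n : ℝ)) * ∑ i ∈ Finset.range n, (f : M → ℝ) (X i ω)
              - ∫ x, (f : M → ℝ) x ∂μ|)
          atTop (𝓝 0) :=
  bracketing_glivenko_cantelli_general P μ X hXmeas hXindep hXlaw F hFmeas hbracket
end

section
/- Semigroup approximation estimate. For all real numbers λ > 0, t > 0 and h > 0 with hλ ≤ 1/2, one has | (1 − hλ)^{t/h} − e^{−λt} | ≤ e^{−λt} ( e^{t λ² h} − 1 ). -/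
lemma one_sub_lower {x : ℝ} (hx : 0 ≤ x) (hx2 : x ≤ 1 / 2) :
    Real.exp (-(x + x ^ 2)) ≤ 1 - x := by
  have hq := Real.quadratic_le_exp_of_nonneg (by positivity : (0:ℝ) ≤ x + x ^ 2)
  rw [Real.exp_neg, inv_le_iff_one_le_mul₀ (Real.exp_pos _)]
  nlinarith [Real.exp_pos (x + x ^ 2)]

lemma one_sub_upper {x : ℝ} : 1 - x ≤ Real.exp (-x) := by
  have := Real.add_one_le_exp (-x); linarith

/-- Semigroup approximation estimate: for `λ, t, h > 0` with `hλ ≤ 1/2`,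
`|(1 − hλ)^{t/h} − e^{−λt}| ≤ e^{−λt} (e^{tλ²h} − 1)`. -/
theorem semigroup_approximation_estimate
    (lam t h : ℝ) (hlam : 0 < lam) (ht : 0 < t) (hh : 0 < h)
    (hhl : h * lam ≤ 1 / 2) :
    |(1 - h * lam) ^ (t / h) - Real.exp (-(lam * t))|
      ≤ Real.exp (-(lam * t)) * (Real.exp (t * lam ^ 2 * h) - 1) := by
  set x := h * lam with hxdef
  have hx0 : 0 < x := mul_pos hh hlam
  have hth : 0 < t / h := div_pos ht hh
  have hlow : Real.exp (-(x + x ^ 2)) ≤ 1 - x := one_sub_lower hx0.le hhl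
  have hexp_pow : ∀ a : ℝ, (Real.exp a) ^ (t / h) = Real.exp (a * (t / h)) := by
    intro a
    rw [← Real.exp_log (Real.exp_pos a), Real.log_exp, ← Real.exp_mul]
  -- lower bound
  have h1 : Real.exp (-(x + x ^ 2) * (t / h)) ≤ (1 - x) ^ (t / h) := by
    rw [← hexp_pow]
    exact Real.rpow_le_rpow (Real.exp_pos _).le hlow hth.le
  -- upper bound
  have h2 : (1 - x) ^ (t / h) ≤ Real.exp (-x * (t / h)) := by
    rw [← hexp_pow]
    exact Real.rpow_le_rpow (by linarith) one_sub_upper hth.le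
  have hxval : -x * (t / h) = -(lam * t) := by
    field_simp [hxdef]; ring
  have hxval2 : -(x + x ^ 2) * (t / h) = -(lam * t) - t * lam ^ 2 * h := by
    field_simp [hxdef]; ring
  rw [hxval] at h2
  rw [hxval2] at h1
  rw [abs_sub_le_iff]
  constructor
  · have : 0 ≤ Real.exp (-(lam * t)) * (Real.exp (t * lam ^ 2 * h) - 1) := by
      have := Real.add_one_le_exp (t * lam ^ 2 * h)
      nlinarith [Real.exp_pos (-(lam * t)), mul_pos (mul_pos ht (pow_pos hlam 2)) hh]
    linarith
  · have key : Real.exp (-(lam * t) - t * lam ^ 2 * h)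
        = Real.exp (-(lam * t)) * Real.exp (-(t * lam ^ 2 * h)) := by
      rw [← Real.exp_add]; ring_nf
    have hsum : Real.exp (-(t * lam ^ 2 * h)) + Real.exp (t * lam ^ 2 * h) ≥ 2 := by
      nlinarith [Real.add_one_le_exp (-(t * lam ^ 2 * h)), Real.add_one_le_exp (t * lam ^ 2 * h)]
    nlinarith [Real.exp_pos (-(lam * t))]
end

section
/- Symmetric embedding. Let M be a nonempty compact smooth manifold without boundary, and let σ : M → M be a smooth map satisfying σ ∘ σ = id_M and σ(x) ≠ x for all x ∈ M (a smooth free involution). Then there exist an integer N ≥ 1 and a smooth map u : M → ℝ^N such that u is injective, u is an immersion (the differential of u at every point of M is an injective linear map from the tangent space to ℝ^N), and u(σ(x)) = −u(x) for all x ∈ M. -/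
/-!
Start from a Whitney embedding `f : M → ℝⁿ` and put `u x = Ψ (f x, f (σ x))` with
`Ψ (a, b) = (a - b, (a - b) ⊗ (a + b))`, the tensor `v ⊗ w` being the rank-one operator
`z ↦ ⟪v, z⟫ • w`. Swapping `a` and `b` changes the sign of `Ψ`, whence
`u ∘ σ = -u`. Off the diagonal, `a - b ≠ 0` is read off the first component and then `a + b` off
the second, so `Ψ` is injective there, and by the same argument so is its derivative
`(α, β) ↦ (α - β, (α - β) ⊗ (a + b) + (a - b) ⊗ (α + β))`. Since `σ` is free, `(f x, f (σ x))`
never meets the diagonal.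
-/

open scoped Manifold ContDiff
open Function

section RealRankOne

variable {F W : Type*} [NormedAddCommGroup F] [InnerProductSpace ℝ F]
  [NormedAddCommGroup W] [NormedSpace ℝ W]

noncomputable def realRankOne : F →L[ℝ] W →L[ℝ] (F →L[ℝ] W) :=
  (InnerProductSpace.rankOne ℝ).flip

@[simp]
lemma realRankOne_apply (v : F) (w : W) (z : F) : realRankOne v w z = inner ℝ v z • w := rfl

lemma realRankOne_injective {v : F} (hv : v ≠ 0) : Injective (realRankOne (W := W) v) := by
  intro w w' h
  have h' : inner ℝ v v • w = inner ℝ v v • w' := by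
    simpa using congrArg (fun T : F →L[ℝ] W => T v) h
  exact smul_right_injective W (inner_self_ne_zero.2 hv) h'

end RealRankOne

section OddMap

variable {F U : Type*} [NormedAddCommGroup F] [NormedSpace ℝ F]
  [NormedAddCommGroup U] [NormedSpace ℝ U]

variable (B : F →L[ℝ] F →L[ℝ] U)

noncomputable def oddMap (p : F × F) : F × U :=
  (p.1 - p.2, B (p.1 - p.2) (p.1 + p.2))

lemma oddMap_swap (p : F × F) : oddMap B p.swap = -oddMap B p := by
  simp only [oddMap, Prod.fst_swap, Prod.snd_swap, ← neg_sub p.1 p.2, add_comm p.2, map_neg,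
    neg_apply, Prod.neg_mk]

lemma contDiff_oddMap {n : WithTop ℕ∞} : ContDiff ℝ n (oddMap B) :=
  (contDiff_fst.sub contDiff_snd).prodMk
    ((B.contDiff.comp (contDiff_fst.sub contDiff_snd)).clm_apply (contDiff_fst.add contDiff_snd))

lemma fderiv_oddMap_apply (p q : F × F) :
    fderiv ℝ (oddMap B) p q =
      (q.1 - q.2, B (q.1 - q.2) (p.1 + p.2) + B (p.1 - p.2) (q.1 + q.2)) := by
  have hsub : HasFDerivAt (fun p : F × F => p.1 - p.2)
      (ContinuousLinearMap.fst ℝ F F - ContinuousLinearMap.snd ℝ F F) p :=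
    hasFDerivAt_fst.sub hasFDerivAt_snd
  have hadd : HasFDerivAt (fun p : F × F => p.1 + p.2)
      (ContinuousLinearMap.fst ℝ F F + ContinuousLinearMap.snd ℝ F F) p :=
    hasFDerivAt_fst.add hasFDerivAt_snd
  have h : HasFDerivAt (oddMap B) _ p := hsub.prodMk (B.hasFDerivAt_of_bilinear hsub hadd)
  rw [h.fderiv]
  simp [add_comm]

variable {B} (hB : ∀ v ≠ 0, Injective (B v))
include hB

lemma oddMap_injective_of_ne {p q : F × F} (hp : p.1 ≠ p.2) (h : oddMap B p = oddMap B q) :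
    p = q := by
  obtain ⟨hsub, hprod⟩ := Prod.mk.inj h
  rw [← hsub] at hprod
  have hadd := hB _ (sub_ne_zero.2 hp) hprod
  ext
  · linear_combination (norm := module) (2⁻¹ : ℝ) • (hsub + hadd)
  · linear_combination (norm := module) (2⁻¹ : ℝ) • (hadd - hsub)

lemma injective_fderiv_oddMap {p : F × F} (hp : p.1 ≠ p.2) :
    Injective (fderiv ℝ (oddMap B) p) := by
  rw [injective_iff_map_eq_zero]
  intro q hq
  rw [fderiv_oddMap_apply, Prod.mk_eq_zero, sub_eq_zero] at hq
  obtain ⟨hq₁, hq₂⟩ := hq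
  rw [hq₁, sub_self, map_zero, zero_apply, zero_add,
    ← map_zero (B (p.1 - p.2))] at hq₂
  have hq₂_zero : q.2 = 0 := by
    simpa [← two_smul ℝ q.2] using hB _ (sub_ne_zero.2 hp) hq₂
  exact Prod.ext (hq₁.trans hq₂_zero) hq₂_zero

lemma injective_oddMap_comp {α : Type*} {f : α → F} {σ : α → α} (hf : Injective f)
    (hσ : ∀ y, σ y ≠ y) : Injective (fun y => oddMap B (f y, f (σ y))) := fun y _ h =>
  hf (congrArg Prod.fst (oddMap_injective_of_ne hB (hf.ne (hσ y).symm) h))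

end OddMap

section Immersion

variable {E H M F G : Type*} [NormedAddCommGroup E] [NormedSpace ℝ E] [TopologicalSpace H]
  {I : ModelWithCorners ℝ E H} [TopologicalSpace M] [ChartedSpace H M]
  [NormedAddCommGroup F] [NormedSpace ℝ F] [NormedAddCommGroup G] [NormedSpace ℝ G]
  {x : M}

lemma injective_mfderiv_comp_of_fderiv {g : M → F} {Φ : F → G}
    (hΦ : DifferentiableAt ℝ Φ (g x)) (hg : MDifferentiableAt I 𝓘(ℝ, F) g x)
    (hΦ' : Injective (fderiv ℝ Φ (g x))) (hg' : Injective (mfderiv I 𝓘(ℝ, F) g x)) :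
    Injective (mfderiv I 𝓘(ℝ, G) (Φ ∘ g) x) := by
  rw [mfderiv_comp x hΦ.mdifferentiableAt hg, mfderiv_eq_fderiv]
  exact hΦ'.comp hg'

lemma injective_mfderiv_prodMk_of_left {f : M → F} {k : M → G}
    (hf : MDifferentiableAt I 𝓘(ℝ, F) f x) (hk : MDifferentiableAt I 𝓘(ℝ, G) k x)
    (hf' : Injective (mfderiv I 𝓘(ℝ, F) f x)) :
    Injective (mfderiv I 𝓘(ℝ, F × G) (fun y => (f y, k y)) x) := by
  rw [modelWithCornersSelf_prod, ← chartedSpaceSelf_prod, mfderiv_prodMk hf hk]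
  intro ξ η h
  exact hf' (congrArg Prod.fst h)

variable {U : Type*} [NormedAddCommGroup U] [NormedSpace ℝ U]
  (B : F →L[ℝ] F →L[ℝ] U) {f : M → F} {σ : M → M}

lemma contMDiff_oddMap_comp {n : WithTop ℕ∞} (hf : ContMDiff I 𝓘(ℝ, F) n f)
    (hσ : ContMDiff I I n σ) : ContMDiff I 𝓘(ℝ, F × U) n (fun y => oddMap B (f y, f (σ y))) :=
  (contDiff_oddMap B).comp_contMDiff (hf.prodMk_space (hf.comp hσ))

variable {B} (hB : ∀ v ≠ 0, Injective (B v))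
include hB

lemma injective_mfderiv_oddMap_comp (hf : MDifferentiable I 𝓘(ℝ, F) f)
    (hσ : MDifferentiable I I σ) (hx : f x ≠ f (σ x))
    (hf' : Injective (mfderiv I 𝓘(ℝ, F) f x)) :
    Injective (mfderiv I 𝓘(ℝ, F × U) (fun y => oddMap B (f y, f (σ y))) x) :=
  injective_mfderiv_comp_of_fderiv (g := fun y => (f y, f (σ y)))
    ((contDiff_oddMap B (n := 1)).differentiable one_ne_zero _)
    ((hf x).prodMk_space ((hf.comp hσ) x))
    (injective_fderiv_oddMap hB hx)
    (injective_mfderiv_prodMk_of_left (hf x) ((hf.comp hσ) x) hf')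

end Immersion

theorem exists_symmetric_embedding_general
    {E : Type*} [NormedAddCommGroup E] [NormedSpace ℝ E] [FiniteDimensional ℝ E]
    {H : Type*} [TopologicalSpace H] (I : ModelWithCorners ℝ E H)
    {M : Type*} [TopologicalSpace M] [ChartedSpace H M] [IsManifold I (⊤ : ℕ∞) M]
    [CompactSpace M] [Nonempty M] [T2Space M]
    (σ : M → M) (hσ_smooth : ContMDiff I I (⊤ : ℕ∞) σ)
    (hσ_invol : σ ∘ σ = id) (hσ_free : ∀ x : M, σ x ≠ x) :
    ∃ N : ℕ, 1 ≤ N ∧ ∃ u : M → EuclideanSpace ℝ (Fin N),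
      ContMDiff I (𝓘(ℝ, EuclideanSpace ℝ (Fin N))) (⊤ : ℕ∞) u
      ∧ Function.Injective u
      ∧ (∀ x : M, Function.Injective (mfderiv I (𝓘(ℝ, EuclideanSpace ℝ (Fin N))) u x))
      ∧ (∀ x : M, u (σ x) = -u x) := by
  obtain ⟨n, f, hf, hf_emb, hf'⟩ := exists_embedding_euclidean_of_compact (I := I) (M := M)
  let F := EuclideanSpace ℝ (Fin n)
  have : Nontrivial F :=
    nontrivial_of_ne _ _ (hf_emb.injective.ne (hσ_free (Classical.arbitrary M)).symm)
  have hB : ∀ v : F, v ≠ 0 → Injective (realRankOne (W := F) v) := fun _ => realRankOne_injective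
  let v := fun x => oddMap (realRankOne (F := F) (W := F)) (f x, f (σ x))
  have hv : ContMDiff I 𝓘(ℝ, F × (F →L[ℝ] F)) ∞ v := contMDiff_oddMap_comp _ hf hσ_smooth
  refine ⟨_, Module.finrank_pos (R := ℝ) (M := F × (F →L[ℝ] F)), toEuclidean ∘ v,
    toEuclidean.contDiff.comp_contMDiff hv,
    toEuclidean.injective.comp (injective_oddMap_comp hB hf_emb.injective hσ_free),
    fun x => ?_, fun x => ?_⟩
  · refine injective_mfderiv_comp_of_fderiv toEuclidean.differentiableAt
      (hv.mdifferentiableAt (by simp)) (by rw [toEuclidean.fderiv]; exact toEuclidean.injective) ?_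
    exact injective_mfderiv_oddMap_comp hB (hf.mdifferentiable (by simp))
      (hσ_smooth.mdifferentiable (by simp)) (hf_emb.injective.ne (hσ_free x).symm) (hf' x)
  · change toEuclidean (oddMap _ (f (σ x), f (σ (σ x)))) = -toEuclidean (oddMap _ (f x, f (σ x)))
    rw [show σ (σ x) = x from congrFun hσ_invol x, ← map_neg, ← oddMap_swap]
    rfl

/-- Symmetric embedding: a compact smooth manifold without boundary carrying
a smooth free involution `σ` admits a smooth injective immersion `u` into some `ℝ^N` with
`u ∘ σ = −u`. -/
theorem exists_symmetric_embedding
    {E : Type*} [NormedAddCommGroup E] [NormedSpace ℝ E] [FiniteDimensional ℝ E]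
    {H : Type*} [TopologicalSpace H] (I : ModelWithCorners ℝ E H) [I.Boundaryless]
    {M : Type*} [TopologicalSpace M] [ChartedSpace H M] [IsManifold I (⊤ : ℕ∞) M]
    [CompactSpace M] [Nonempty M] [T2Space M]
    (σ : M → M) (hσ_smooth : ContMDiff I I (⊤ : ℕ∞) σ)
    (hσ_invol : σ ∘ σ = id) (hσ_free : ∀ x : M, σ x ≠ x) :
    ∃ N : ℕ, 1 ≤ N ∧ ∃ u : M → EuclideanSpace ℝ (Fin N),
      ContMDiff I (𝓘(ℝ, EuclideanSpace ℝ (Fin N))) (⊤ : ℕ∞) u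
      ∧ Function.Injective u
      ∧ (∀ x : M, Function.Injective (mfderiv I (𝓘(ℝ, EuclideanSpace ℝ (Fin N))) u x))
      ∧ (∀ x : M, u (σ x) = -u x) :=
  exists_symmetric_embedding_general I σ hσ_smooth hσ_invol hσ_free
end

section
/- Uniform law of large numbers for the kernel class. Let M ⊂ ℝ^p be a nonempty compact set, μ a Borel probability measure on M, K : [0,∞) → ℝ a continuous function, and h > 0 fixed. Let X₁, X₂, … be independent M-valued random variables with law μ. Then, almost surely, sup_{x ∈ M} | (1/n) Σ_{j=1}^n K(‖x − X_j‖/√h) − ∫_M K(‖x − y‖/√h) dμ(y) | → 0 as n → ∞; that is, the class 𝒦_h = { y ↦ K(‖x − y‖/√h) : x ∈ M } is a Glivenko–Cantelli class. -/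
/-!
Currying the kernel gives a continuous map `f : ℝ^p → C(M, ℝ)`, `f y = (x ↦ K(‖x − y‖/√h))`,
bounded on the compact set `M`. Hence `f(X₁), f(X₂), …` are independent,
identically distributed, bounded random variables in the Banach space `C(M, ℝ)`, and
Etemadi's strong law of large numbers in Banach spaces gives almost sure convergence of their
averages in the sup norm, which is exactly the uniform convergence over `x ∈ M`.
-/

open MeasureTheory Filter Topology ProbabilityTheory

section UniformStrongLaw

variable {Ω E T : Type*} [MeasurableSpace Ω] {P : Measure Ω}
  [TopologicalSpace E] [MeasurableSpace E] [OpensMeasurableSpace E]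
  [TopologicalSpace T] [CompactSpace T]

theorem ae_tendsto_average_continuousMap_comp (f : C(E, C(T, ℝ))) (X : ℕ → Ω → E)
    (hint : Integrable (fun ω => f (X 0 ω)) P)
    (hindep : Pairwise fun i j => IndepFun (X i) (X j) P)
    (hident : ∀ i, IdentDistrib (X i) (X 0) P P) :
    ∀ᵐ ω ∂P, Tendsto (fun n : ℕ => (n : ℝ)⁻¹ • ∑ j ∈ Finset.range n, f (X j ω)) atTop
      (𝓝 (∫ ω, f (X 0 ω) ∂P)) := by
  -- `C(T, ℝ)` has no global measurable structure; the strong law only needs the Borel one.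
  let _ : MeasurableSpace C(T, ℝ) := borel _
  have : BorelSpace C(T, ℝ) := ⟨rfl⟩
  exact strong_law_ae (fun i ω => f (X i ω)) hint
    (fun i j hij => (hindep hij).comp f.continuous.measurable f.continuous.measurable)
    (fun i => (hident i).comp f.continuous.measurable)

theorem ae_tendsto_iSup_abs_average_sub_integral (f : C(E, C(T, ℝ))) (μ : Measure E)
    (X : ℕ → Ω → E) (hX : ∀ i, Measurable (X i)) (hint : Integrable (fun ω => f (X 0 ω)) P)
    (hindep : Pairwise fun i j => IndepFun (X i) (X j) P)
    (hlaw : ∀ i, P.map (X i) = μ) :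
    ∀ᵐ ω ∂P, Tendsto (fun n : ℕ => ⨆ t : T,
      |(1 / (n : ℝ)) * ∑ j ∈ Finset.range n, f (X j ω) t - ∫ y, f y t ∂μ|) atTop (𝓝 0) := by
  have hident : ∀ i, IdentDistrib (X i) (X 0) P P := fun i =>
    ⟨(hX i).aemeasurable, (hX 0).aemeasurable, by rw [hlaw i, hlaw 0]⟩
  have hmean : ∀ t, (∫ ω, f (X 0 ω) ∂P) t = ∫ y, f y t ∂μ := fun t => by
    have hft : Continuous fun y => f y t := by fun_prop
    rw [ContinuousMap.integral_apply hint, ← hlaw 0,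
      integral_map (hX 0).aemeasurable hft.aestronglyMeasurable]
  filter_upwards [ae_tendsto_average_continuousMap_comp f X hint hindep hident] with ω hω
  rw [tendsto_iff_norm_sub_tendsto_zero] at hω
  convert hω using 2 with n
  rw [ContinuousMap.norm_eq_iSup_norm]
  congr 1 with t
  simp [hmean, Real.norm_eq_abs, Finset.sum_apply]

end UniformStrongLaw

theorem kernel_class_glivenko_cantelli_general
    {p : ℕ} {Ω : Type*} [MeasurableSpace Ω] (P : Measure Ω) [IsProbabilityMeasure P]
    (M : Set (EuclideanSpace ℝ (Fin p))) (hMcpt : IsCompact M)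
    (μ : Measure (EuclideanSpace ℝ (Fin p)))
    (K : ℝ → ℝ) (hKcont : ContinuousOn K (Set.Ici 0))
    (h : ℝ)
    (X : ℕ → Ω → EuclideanSpace ℝ (Fin p))
    (hXmem : ∀ i ω, X i ω ∈ M)
    (hXmeas : ∀ i, Measurable (X i))
    (hXindep : ProbabilityTheory.iIndepFun X P)
    (hXlaw : ∀ i, Measure.map (X i) P = μ) :
    ∀ᵐ ω ∂P, Tendsto
        (fun n : ℕ => ⨆ x : M,
          |(1 / (n : ℝ)) * ∑ j ∈ Finset.range n,
              K (‖(x : EuclideanSpace ℝ (Fin p)) - X j ω‖ / Real.sqrt h)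
            - ∫ y in M, K (‖(x : EuclideanSpace ℝ (Fin p)) - y‖ / Real.sqrt h) ∂μ|)
        atTop (𝓝 0) := by
  have : CompactSpace M := isCompact_iff_compactSpace.mp hMcpt
  have hkernel : Continuous fun q : EuclideanSpace ℝ (Fin p) × M =>
      K (‖(q.2 : EuclideanSpace ℝ (Fin p)) - q.1‖ / Real.sqrt h) :=
    hKcont.comp_continuous (by fun_prop) fun q => div_nonneg (norm_nonneg _) (Real.sqrt_nonneg _)
  let f : C(EuclideanSpace ℝ (Fin p), C(M, ℝ)) := ContinuousMap.curry ⟨_, hkernel⟩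
  obtain ⟨C, hC⟩ := (hMcpt.image f.continuous).isBounded.exists_norm_le
  have hint : Integrable (fun ω => f (X 0 ω)) P :=
    Integrable.of_bound (f.continuous.comp_stronglyMeasurable
      (hXmeas 0).stronglyMeasurable).aestronglyMeasurable C
      (.of_forall fun ω => hC _ (Set.mem_image_of_mem f (hXmem 0 ω)))
  have hμM : ∀ᵐ y ∂μ, y ∈ M := by
    rw [← hXlaw 0]
    exact (ae_map_iff (hXmeas 0).aemeasurable hMcpt.isClosed.measurableSet).2 (.of_forall (hXmem 0))
  rw [Measure.restrict_eq_self_of_ae_mem hμM]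
  exact ae_tendsto_iSup_abs_average_sub_integral f μ X hXmeas hint
      (fun i j hij => hXindep.indepFun hij) hXlaw

/-- Uniform law of large numbers for the kernel class
`𝒦_h = { y ↦ K(‖x − y‖/√h) : x ∈ M }`: almost surely, the empirical kernel averages converge
to their expectations uniformly over `x ∈ M`. -/
theorem kernel_class_glivenko_cantelli
    {p : ℕ} {Ω : Type*} [MeasurableSpace Ω] (P : Measure Ω) [IsProbabilityMeasure P]
    (M : Set (EuclideanSpace ℝ (Fin p))) (hMne : M.Nonempty) (hMcpt : IsCompact M)
    (μ : Measure (EuclideanSpace ℝ (Fin p))) [IsProbabilityMeasure μ] (hμM : μ M = 1)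
    (K : ℝ → ℝ) (hKcont : ContinuousOn K (Set.Ici 0))
    (h : ℝ) (hh : 0 < h)
    (X : ℕ → Ω → EuclideanSpace ℝ (Fin p))
    (hXmem : ∀ i ω, X i ω ∈ M)
    (hXmeas : ∀ i, Measurable (X i))
    (hXindep : ProbabilityTheory.iIndepFun X P)
    (hXlaw : ∀ i, Measure.map (X i) P = μ) :
    ∀ᵐ ω ∂P, Tendsto
        (fun n : ℕ => ⨆ x : M,
          |(1 / (n : ℝ)) * ∑ j ∈ Finset.range n,
              K (‖(x : EuclideanSpace ℝ (Fin p)) - X j ω‖ / Real.sqrt h)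
            - ∫ y in M, K (‖(x : EuclideanSpace ℝ (Fin p)) - y‖ / Real.sqrt h) ∂μ|)
        atTop (𝓝 0) :=
  kernel_class_glivenko_cantelli_general P M hMcpt μ K hKcont h X hXmem hXmeas hXindep hXlaw
end
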